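/- For every k > 0, the quantity 1 − 3·coth(k)/k + 3/k² is strictly positive and strictly less than 1. -/

import Mathlib

/-- Hyperbolic cotangent. -/
noncomputable def coth (k : ℝ) : ℝ := Real.cosh k / Real.sinh k

/-!
Over the common denominator `k² sinh k`, the weight is positive iff `3k cosh k < (k² + 3) sinh k`
and less than `1` iff `sinh k < k cosh k`. Both differences vanish at `0` and have the positive
derivatives `x sinh x` and `x (x cosh x - sinh x)` on `(0, ∞)`.
-/

open Real Set

lemma pos_of_hasDerivAt_pos {f f' : ℝ → ℝ} (hf : ∀ x, HasDerivAt f (f' x) x) (h0 : f 0 = 0)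
    (hf' : ∀ x, 0 < x → 0 < f' x) {x : ℝ} (hx : 0 < x) : 0 < f x := by
  have hmono : StrictMonoOn f (Ici 0) := by
    refine strictMonoOn_of_deriv_pos (convex_Ici 0)
      (fun y _ ↦ (hf y).continuousAt.continuousWithinAt) fun y hy ↦ ?_
    rw [interior_Ici] at hy
    exact (hf y).deriv ▸ hf' y hy
  simpa only [h0] using hmono self_mem_Ici hx.le hx

theorem Real.sinh_lt_mul_cosh {x : ℝ} (hx : 0 < x) : sinh x < x * cosh x := by
  have hderiv (y : ℝ) : HasDerivAt (fun y ↦ y * cosh y - sinh y) (y * sinh y) y :=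
    (((hasDerivAt_id' y).fun_mul (hasDerivAt_cosh y)).fun_sub (hasDerivAt_sinh y)).congr_deriv
      (by ring)
  have := pos_of_hasDerivAt_pos hderiv (by simp) (fun y hy ↦ mul_pos hy (sinh_pos_iff.2 hy)) hx
  linarith

theorem Real.three_mul_mul_cosh_lt {x : ℝ} (hx : 0 < x) :
    3 * x * cosh x < (x ^ 2 + 3) * sinh x := by
  have hderiv (y : ℝ) : HasDerivAt (fun y ↦ (y ^ 2 + 3) * sinh y - 3 * y * cosh y)
      (y * (y * cosh y - sinh y)) y :=
    ((((hasDerivAt_pow 2 y).add_const 3).fun_mul (hasDerivAt_sinh y)).fun_sub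
      (((hasDerivAt_id' y).const_mul 3).fun_mul (hasDerivAt_cosh y))).congr_deriv
      (by norm_num; ring)
  have := pos_of_hasDerivAt_pos hderiv (by simp)
    (fun y hy ↦ mul_pos hy (sub_pos.2 (sinh_lt_mul_cosh hy))) hx
  linarith

/-- For every `k > 0`, the anisotropy weight `1 − 3 coth k / k + 3/k²` lies strictly
between `0` and `1`. -/
theorem anisotropy_weight_bounds (k : ℝ) (hk : 0 < k) :
    0 < 1 - 3 * coth k / k + 3 / k ^ 2 ∧
    1 - 3 * coth k / k + 3 / k ^ 2 < 1 := by
  have hsinh : 0 < sinh k := sinh_pos_iff.2 hk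
  have hweight : 1 - 3 * coth k / k + 3 / k ^ 2 =
      ((k ^ 2 + 3) * sinh k - 3 * k * cosh k) / (k ^ 2 * sinh k) := by
    rw [coth]
    field_simp
    ring
  have hcoweight : 1 - (1 - 3 * coth k / k + 3 / k ^ 2) =
      3 * (k * cosh k - sinh k) / (k ^ 2 * sinh k) := by
    rw [coth]
    field_simp
    ring
  constructor
  · rw [hweight]
    exact div_pos (sub_pos.2 (three_mul_mul_cosh_lt hk)) (by positivity)
  · rw [← sub_pos, hcoweight]
    exact div_pos (mul_pos three_pos (sub_pos.2 (sinh_lt_mul_cosh hk))) (by positivity)
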